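/- arXiv:math/0106083 — 3 statements merged into one kernel-verified Lean document; each statement's English description precedes it below -/
import Mathlib

section
/- Let P and P' be (G, H)-bisets, each with commuting free transitive left G-action and free transitive right H-action, with structure maps u_p : H → G for P and u'_{p'} : H → G for P' defined by p • h = (u_p h) • p and p' • h = (u'_{p'} h) • p'. Let f : P → P' be a left G-equivariant map, fix p ∈ P and p' ∈ P' and define g ∈ G by f(p) = g • p'. Then f is right H-equivariant (f(q • h) = f(q) • h for all q ∈ P, h ∈ H) if and only if u_p = i_g ∘ u'_{p'}, where i_g denotes conjugation by g in G. -/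
/-- A left `G`-equivariant map of `(G,H)`-bitorsors is a bitorsor morphism
if and only if `u_p = i_g ∘ u'_{p'}`. -/
theorem stmt_5 {P P' G H : Type*} [Group G] [Group H]
    (lact : G → P → P) (ract : P → H → P)
    (lact' : G → P' → P') (ract' : P' → H → P')
    (lone : ∀ p, lact 1 p = p)
    (lmul : ∀ (g g' : G) p, lact (g * g') p = lact g (lact g' p))
    (rone : ∀ p, ract p 1 = p)
    (rmul : ∀ p (h h' : H), ract (ract p h) h' = ract p (h * h'))
    (hcomm : ∀ (g : G) p (h : H), ract (lact g p) h = lact g (ract p h))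
    (lfree : ∀ (g : G) p, lact g p = p → g = 1)
    (ltrans : ∀ p q : P, ∃ g : G, lact g p = q)
    (rfree : ∀ p (h : H), ract p h = p → h = 1)
    (rtrans : ∀ p q : P, ∃ h : H, ract p h = q)
    (lone' : ∀ p, lact' 1 p = p)
    (lmul' : ∀ (g g' : G) p, lact' (g * g') p = lact' g (lact' g' p))
    (rone' : ∀ p, ract' p 1 = p)
    (rmul' : ∀ p (h h' : H), ract' (ract' p h) h' = ract' p (h * h'))
    (hcomm' : ∀ (g : G) p (h : H), ract' (lact' g p) h = lact' g (ract' p h))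
    (lfree' : ∀ (g : G) p, lact' g p = p → g = 1)
    (ltrans' : ∀ p q : P', ∃ g : G, lact' g p = q)
    (rfree' : ∀ p (h : H), ract' p h = p → h = 1)
    (rtrans' : ∀ p q : P', ∃ h : H, ract' p h = q)
    (u : P → H → G) (u' : P' → H → G)
    (hu : ∀ p h, ract p h = lact (u p h) p)
    (hu' : ∀ p h, ract' p h = lact' (u' p h) p)
    (f : P → P')
    (hf : ∀ (γ : G) q, f (lact γ q) = lact' γ (f q))
    (p : P) (p' : P') (g : G)
    (hfp : f p = lact' g p') :
    (∀ q (h : H), f (ract q h) = ract' (f q) h) ↔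
      (∀ h : H, u p h = g * u' p' h * g⁻¹) := by
  have cancel : ∀ (a b : G), lact' a p' = lact' b p' → a = b := by
    intro a b hab
    have : lact' (b⁻¹ * a) p' = p' := by
      rw [lmul', hab, ← lmul', inv_mul_cancel, lone']
    have := lfree' _ _ this
    group at this ⊢
    rw [← mul_one b, ← this]
    group
  constructor
  · intro hfeq h
    have h1 : f (ract p h) = lact' (u p h * g) p' := by
      rw [hu, hf, hfp, ← lmul']
    have h2 : f (ract p h) = lact' (g * u' p' h) p' := by
      rw [hfeq, hfp, hcomm', hu', ← lmul']
    have := cancel _ _ (h1.symm.trans h2)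
    rw [eq_mul_inv_iff_mul_eq]
    exact this
  · intro hc q h
    obtain ⟨γ, hγ⟩ := ltrans p q
    subst hγ
    have lhs : f (ract (lact γ p) h) = lact' (γ * (g * u' p' h * g⁻¹) * g) p' := by
      rw [hcomm, hu, hf, hf, hfp, ← hc h, ← lmul', ← lmul']
    have rhs : ract' (f (lact γ p)) h = lact' (γ * g * u' p' h) p' := by
      rw [hf, hfp, hcomm', hcomm', hu', ← lmul', ← lmul']
    rw [lhs, rhs]
    congr 1
    group
end

section
/- Let C be a groupoid with two families of objects (x i) and (x' i) indexed by I, isomorphisms φ i j : x j ⟶ x i and φ' i j : x' j ⟶ x' i, and isomorphisms χ i : x i ⟶ x' i. Define λ i j (g) = φ i j ∘ g ∘ (φ i j)⁻¹ on G i := Aut(x i), g i j k = φ i j ∘ φ j k ∘ (φ i k)⁻¹, and similarly λ' i j, g' i j k from the primed data. Define m i : G i → G' i := Aut(x' i) by m i (g) = χ i ∘ g ∘ (χ i)⁻¹, and define δ i j ∈ G' i by the equation φ' i j ∘ χ j = δ i j ∘ χ i ∘ φ i j. Then the coboundary conditions hold: (1) λ' i j ∘ m j = i_{δ i j} ∘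 m i ∘ λ i j; and (2) (g' i j k) * (δ i k) = λ' i j (δ j k) * (δ i j) * m i (g i j k). -/
open CategoryTheory

/-- `λ_{ij}(g) = φ_{ij} ∘ g ∘ φ_{ij}⁻¹` (in diagrammatic order). -/
def lamG8 {C : Type*} [Groupoid C] {I : Type*} (x : I → C)
    (φ : ∀ i j : I, x j ⟶ x i) (i j : I) (g : x j ⟶ x j) : x i ⟶ x i :=
  Groupoid.inv (φ i j) ≫ g ≫ φ i j

/-- `g_{ijk} = φ_{ij} ∘ φ_{jk} ∘ φ_{ik}⁻¹` (in diagrammatic order). -/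
def gCoc8 {C : Type*} [Groupoid C] {I : Type*} (x : I → C)
    (φ : ∀ i j : I, x j ⟶ x i) (i j k : I) : x i ⟶ x i :=
  Groupoid.inv (φ i k) ≫ φ j k ≫ φ i j

/-- Coboundary relations between the cocycle pairs of two trivializations of
a gerbe-like structure in a groupoid. -/
theorem stmt_8 {C : Type*} [Groupoid C] {I : Type*} (x x' : I → C)
    (φ : ∀ i j : I, x j ⟶ x i) (φ' : ∀ i j : I, x' j ⟶ x' i)
    (χ : ∀ i : I, x i ⟶ x' i)
    (δ : ∀ i j : I, x' i ⟶ x' i)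
    (hδ : ∀ i j : I, χ j ≫ φ' i j = φ i j ≫ χ i ≫ δ i j) :
    (∀ (i j : I) (g : x j ⟶ x j),
      lamG8 x' φ' i j (Groupoid.inv (χ j) ≫ g ≫ χ j) =
        Groupoid.inv (δ i j) ≫
          (Groupoid.inv (χ i) ≫ lamG8 x φ i j g ≫ χ i) ≫ δ i j) ∧
    (∀ i j k : I,
      δ i k ≫ gCoc8 x' φ' i j k =
        (Groupoid.inv (χ i) ≫ gCoc8 x φ i j k ≫ χ i) ≫ δ i j ≫
          lamG8 x' φ' i j (δ j k)) := by
  have hφ' : ∀ i j, φ' i j = Groupoid.inv (χ j) ≫ φ i j ≫ χ i ≫ δ i j := by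
    intro i j
    rw [← hδ, ← Category.assoc, Groupoid.inv_comp, Category.id_comp]
  constructor
  · intro i j g
    simp [lamG8, hφ', Groupoid.inv_eq_inv, IsIso.inv_comp, Category.assoc]
  · intro i j k
    simp [lamG8, gCoc8, hφ', Groupoid.inv_eq_inv, IsIso.inv_comp, Category.assoc]
end

section
/- (Normalization lemma for crossed-module-valued simplicial cochains.) Let F₁ and F₀ be groups, δ : F₁ → F₀ a group homomorphism, X a set, and n ≥ 1. Suppose given g : X^{n+1} → F₀ and φ_0, …, φ_{n−1} : X^n → F₁ such that for each 0 ≤ i ≤ n−1 and all (x₀, …, x_{n−1}) ∈ X^n: g(x₀, …, x_i, x_i, …, x_{n−1}) = δ(φ_i(x₀, …, x_{n−1})) (condition A_i), and for all 0 ≤ i ≤ j ≤ n−2 and (x₀, …, x_{n−2}) ∈ X^{n−1}: φ_i(x₀, …, x_j, x_j, …, x_{n−2}) = φ_{j+1}(x₀, …, x_i, x_i, …, x_{n−2}) (condition B_{i,j}). Then there exist g' : X^{n+1} → F₀ and χ : X^{n+1} → F₁ such that δ(χ(x₀, …, x_n)) * g'(x₀, …, x_n) = g(x₀, …, x_n)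 for all (x₀, …, x_n), and g' vanishes on all degenerate tuples: g'(x₀, …, x_i, x_i, …, x_{n−1}) = 1 for every 0 ≤ i ≤ n−1. -/
/-- The degenerate tuple `(x₀, …, x_i, x_i, …, x_{n-1})` obtained from an
`n`-tuple `x : Fin n → X` by repeating the `i`-th entry. -/
def degTuple {X : Type*} {n : ℕ} (i : Fin n) (x : Fin n → X) :
    Fin (n + 1) → X :=
  fun j => x (i.predAbove j)

lemma predAbove_val' {n : ℕ} (p : Fin n) (i : Fin (n + 1)) :
    (p.predAbove i).val = if p.val < i.val then i.val - 1 else i.val := by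
  unfold Fin.predAbove
  split
  · rename_i h; rw [Fin.lt_def] at h; simp at h; rw [if_pos h]; simp
  · rename_i h; rw [Fin.lt_def] at h; simp at h; rw [if_neg (by omega)]; simp

lemma succAbove_val' {n : ℕ} (p : Fin (n + 1)) (i : Fin n) :
    (p.succAbove i).val = if i.val < p.val then i.val else i.val + 1 := by
  unfold Fin.succAbove
  split
  · rename_i h; rw [Fin.lt_def] at h; simp at h; rw [if_pos h]; simp
  · rename_i h; rw [Fin.lt_def] at h; simp at h; rw [if_neg (by omega)]; simp

lemma lemA {X : Type*} {n : ℕ} (i : ℕ) (h : i < n) (x : Fin n → X) :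
    (fun t => degTuple ⟨i, h⟩ x ((⟨i + 1, by omega⟩ : Fin (n + 1)).succAbove t)) = x := by
  funext t
  show x _ = x t
  congr 1
  apply Fin.ext
  rw [predAbove_val', succAbove_val']
  split_ifs <;> simp_all <;> omega

lemma lemC {X : Type*} {n : ℕ} (i : ℕ) (hi : i < n) (j : ℕ) (hj : j ≤ n + 1)
    (hij : i + 1 < j) (x : Fin (n + 1) → X) :
    (fun t => degTuple (⟨i, by omega⟩ : Fin (n + 1)) x ((⟨j, by omega⟩ : Fin (n + 2)).succAbove t))
      = degTuple (⟨i, hi⟩ : Fin n) (fun s => x ((⟨j - 1, by omega⟩ : Fin (n + 1)).succAbove s)) := by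
  funext t
  show x _ = x _
  congr 1
  apply Fin.ext
  rw [predAbove_val', succAbove_val', succAbove_val', predAbove_val']
  split_ifs <;> simp_all <;> omega

lemma lemD {X : Type*} {n : ℕ} (a b : ℕ) (hba : b ≤ a) (ha : a < n) (x : Fin n → X) :
    degTuple (⟨a + 1, by omega⟩ : Fin (n + 1)) (degTuple (⟨b, by omega⟩ : Fin n) x)
      = degTuple (⟨b, by omega⟩ : Fin (n + 1)) (degTuple (⟨a, ha⟩ : Fin n) x) := by
  funext t
  show x _ = x _
  congr 1
  apply Fin.ext
  rw [predAbove_val', predAbove_val', predAbove_val', predAbove_val']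
  split_ifs <;> simp_all <;> omega


/-- Normalization lemma for crossed-module-valued simplicial cochains:
a cochain `g` whose degeneracies lift through `δ` can be corrected by a
coboundary `δ(χ)` to a cochain `g'` vanishing on all degenerate tuples. -/
theorem stmt_19 {F₁ F₀ : Type*} [Group F₁] [Group F₀]
    (δ : F₁ →* F₀) {X : Type*} (m : ℕ)
    (g : (Fin (m + 2) → X) → F₀)
    (φ : Fin (m + 1) → (Fin (m + 1) → X) → F₁)
    (hA : ∀ (i : Fin (m + 1)) (x : Fin (m + 1) → X),
      g (degTuple i x) = δ (φ i x))
    (hB : ∀ (i j : Fin m), i ≤ j → ∀ x : Fin m → X,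
      φ i.castSucc (degTuple j x) = φ j.succ (degTuple i x)) :
    ∃ (g' : (Fin (m + 2) → X) → F₀) (χ : (Fin (m + 2) → X) → F₁),
      (∀ x : Fin (m + 2) → X, δ (χ x) * g' x = g x) ∧
      (∀ (i : Fin (m + 1)) (x : Fin (m + 1) → X), g' (degTuple i x) = 1) := by
  suffices h : ∀ k : ℕ, k ≤ m + 1 →
      ∃ (G : (Fin (m + 2) → X) → F₀) (Φ : Fin (m + 1) → (Fin (m + 1) → X) → F₁)
        (χ : (Fin (m + 2) → X) → F₁),
        (∀ x, δ (χ x) * G x = g x) ∧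
        (∀ i : Fin (m + 1), i.val < k → ∀ x, G (degTuple i x) = 1) ∧
        (∀ i : Fin (m + 1), k ≤ i.val → ∀ x, G (degTuple i x) = δ (Φ i x)) ∧
        (∀ i j : Fin m, k ≤ i.val → i ≤ j → ∀ y,
          Φ i.castSucc (degTuple j y) = Φ j.succ (degTuple i y)) ∧
        (∀ (i : Fin (m + 1)) (j : Fin m), j.val < k → k ≤ i.val → ∀ y,
          Φ i (degTuple j y) = 1) by
    obtain ⟨G, Φ, χ, h1, h2, -, -, -⟩ := h (m + 1) le_rfl
    exact ⟨G, χ, h1, fun i x => h2 i i.isLt x⟩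
  intro k
  induction k with
  | zero =>
    exact fun _ => ⟨g, φ, fun _ => 1, by simp, fun i hi => absurd hi (by omega),
      fun i _ x => hA i x, fun i j _ hij y => hB i j hij y,
      fun i j hj _ y => absurd hj (by omega)⟩
  | succ k ih =>
    intro hk1
    obtain ⟨G, Φ, χ, hχ, h1, h2, h3, h4⟩ := ih (by omega)
    have hk : k < m + 1 := by omega
    refine ⟨fun x => (δ (Φ ⟨k, hk⟩ (fun t =>
        x ((⟨k + 1, by omega⟩ : Fin (m + 2)).succAbove t))))⁻¹ * G x,
      fun i x => (Φ ⟨k, hk⟩ (fun t =>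
        degTuple i x ((⟨k + 1, by omega⟩ : Fin (m + 2)).succAbove t)))⁻¹ * Φ i x,
      fun x => χ x * Φ ⟨k, hk⟩ (fun t =>
        x ((⟨k + 1, by omega⟩ : Fin (m + 2)).succAbove t)),
      ?_, ?_, ?_, ?_, ?_⟩
    · intro x
      beta_reduce
      rw [map_mul, mul_assoc, mul_inv_cancel_left]
      exact hχ x
    · -- degeneracies below k+1 vanish
      intro i hi x
      beta_reduce
      by_cases hik : i.val = k
      · have hi' : i = ⟨k, hk⟩ := Fin.ext hik
        subst hi'
        rw [lemA k hk x, h2 ⟨k, hk⟩ le_rfl x, inv_mul_cancel]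
      · have hik' : i.val < k := by omega
        have him : i.val < m := by omega
        have e1 : (fun t => degTuple i x ((⟨k + 1, by omega⟩ : Fin (m + 2)).succAbove t))
            = degTuple (⟨i.val, him⟩ : Fin m)
              (fun s => x ((⟨k, by omega⟩ : Fin (m + 1)).succAbove s)) :=
          lemC (n := m) i.val him (k + 1) (by omega) (by omega) x
        rw [e1, h4 ⟨k, hk⟩ ⟨i.val, him⟩ hik' le_rfl, h1 i hik' x]
        simp
    · intro i hi x
      beta_reduce
      rw [h2 i (by omega) x, map_mul, map_inv]
    · intro i j hi hij y
      beta_reduce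
      have e : degTuple i.castSucc (degTuple j y) = degTuple j.succ (degTuple i y) :=
        (lemD (n := m) j.val i.val hij j.isLt y).symm
      rw [e, h3 i j (by omega) hij y]
    · intro i j hj hi y
      beta_reduce
      obtain ⟨iv, hiv⟩ : ∃ v, i.val = v + 1 := ⟨i.val - 1, by omega⟩
      have hivm : iv < m := by omega
      have hi' : i = ⟨iv + 1, Nat.succ_lt_succ hivm⟩ := Fin.ext hiv
      rw [hi']
      by_cases hjk : j.val = k
      · have hkm : k < m := by omega
        have hj' : j = ⟨k, hkm⟩ := Fin.ext hjk
        rw [hj']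
        have e1 : degTuple (⟨iv + 1, Nat.succ_lt_succ hivm⟩ : Fin (m + 1))
              (degTuple (⟨k, hkm⟩ : Fin m) y)
            = degTuple (⟨k, hk⟩ : Fin (m + 1)) (degTuple (⟨iv, hivm⟩ : Fin m) y) :=
          lemD (n := m) iv k (by omega) hivm y
        rw [e1, lemA (n := m + 1) k hk (degTuple (⟨iv, hivm⟩ : Fin m) y)]
        have e2 : Φ (⟨k, hk⟩ : Fin (m + 1)) (degTuple (⟨iv, hivm⟩ : Fin m) y)
            = Φ (⟨iv + 1, Nat.succ_lt_succ hivm⟩ : Fin (m + 1)) (degTuple (⟨k, hkm⟩ : Fin m) y) :=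
          h3 ⟨k, hkm⟩ ⟨iv, hivm⟩ le_rfl (by rw [Fin.le_def]; simpa using by omega) y
        rw [e2]
        exact inv_mul_cancel _
      · have hjk' : j.val < k := by omega
        have e1 : degTuple (⟨iv + 1, Nat.succ_lt_succ hivm⟩ : Fin (m + 1)) (degTuple j y)
            = degTuple (⟨j.val, by omega⟩ : Fin (m + 1))
              (degTuple (⟨iv, hivm⟩ : Fin m) y) :=
          lemD (n := m) iv j.val (by omega) hivm y
        rw [e1]
        have e2 : (fun t => degTuple (⟨j.val, by omega⟩ : Fin (m + 1))
              (degTuple (⟨iv, hivm⟩ : Fin m) y)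
              ((⟨k + 1, by omega⟩ : Fin (m + 2)).succAbove t))
            = degTuple (⟨j.val, j.isLt⟩ : Fin m)
              (fun s => degTuple (⟨iv, hivm⟩ : Fin m) y
                ((⟨k, by omega⟩ : Fin (m + 1)).succAbove s)) :=
          lemC (n := m) j.val j.isLt (k + 1) (by omega) (by omega) _
        rw [e2, h4 ⟨k, hk⟩ ⟨j.val, j.isLt⟩ hjk' le_rfl,
          h4 (⟨iv + 1, Nat.succ_lt_succ hivm⟩ : Fin (m + 1)) j hjk' (by omega) y]
        simp
end
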